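/- arXiv:1703.09910 — 9 statements merged into one kernel-verified Lean document; each statement's English description precedes it below -/
import Mathlib

section
/- Powerset-determinisation invariant: let S = (C, {C}, R, c_i) be a predicate-free data storage and det(S) have configurations 𝒫(C) with det(r) = {(d, r(d)) | d ⊆ C, r(d) ≠ ∅} for each r ∈ R. For any (S,Σ)-automaton ℳ and its related det(S)-automaton ℳ' (where each transition r is replaced by det(r)), and any sequence θ of transitions: (q,c,w) ⊢_θ (q',c',w') iff for every d containing c there exists d' containing c' with (q,d,w) ⊢_{det(θ)} (q',d',w'). -/
/-- A transition of an automaton with data storage. -/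
structure Tr (Q C Sym : Type) where
  src : Q
  lab : Option Sym
  pred : Set C
  instr : Set (C × C)
  tgt : Q

/-- One-step transition relation of a single transition. -/
def trStep {Q C Sym : Type} (τ : Tr Q C Sym) :
    Q × C × List Sym → Q × C × List Sym → Prop := fun x y =>
  x.1 = τ.src ∧ y.1 = τ.tgt ∧ x.2.1 ∈ τ.pred ∧ (x.2.1, y.2.1) ∈ τ.instr ∧
    x.2.2 = τ.lab.toList ++ y.2.2

/-- Transition relation along a sequence of transitions. -/
def runSeq {Q C Sym : Type} :
    List (Tr Q C Sym) → (Q × C × List Sym) → (Q × C × List Sym) → Prop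
  | [], x, y => x = y
  | τ :: θ, x, y => ∃ z, trStep τ x z ∧ runSeq θ z y

/-- An automaton with data storage (states `Q`, storage configurations `C`,
input alphabet `Sym`). -/
structure Aut (Q C Sym : Type) where
  T : Set (Tr Q C Sym)
  Tfin : T.Finite
  Qi : Set Q
  Qf : Set Q

/-- The language of an automaton, given an initial storage configuration. -/
def langOf {Q C Sym : Type} (init : C) (M : Aut Q C Sym) : Set (List Sym) :=
  {w | ∃ θ : List (Tr Q C Sym), (∀ τ ∈ θ, τ ∈ M.T) ∧
    ∃ q ∈ M.Qi, ∃ q' ∈ M.Qf, ∃ c', runSeq θ (q, init, w) (q', c', [])}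

/-- The language, where the initial storage configuration may be undefined. -/
def langOptOf {Q C Sym : Type} (initO : Option C) (M : Aut Q C Sym) :
    Set (List Sym) :=
  {w | ∃ c₀, initO = some c₀ ∧ w ∈ langOf c₀ M}

/-- A data storage: predicates, instructions, an initial configuration,
such that `r(c)` is finite for every instruction `r` and configuration `c`. -/
structure DS (C : Type) where
  preds : Set (Set C)
  instrs : Set (Set (C × C))
  init : C
  fin : ∀ r ∈ instrs, ∀ c : C, {c' | (c, c') ∈ r}.Finite

/-- An automaton is an `(S,Σ)`-automaton if all its predicates and instructions
come from the data storage `S`. -/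
def ValidFor {Q C Sym : Type} (S : DS C) (M : Aut Q C Sym) : Prop :=
  ∀ τ ∈ M.T, τ.pred ∈ S.preds ∧ τ.instr ∈ S.instrs

/-- Powerset determinisation of an instruction:
`det(r) = {(d, r(d)) | d ⊆ C, r(d) ≠ ∅}`. -/
def detRel {C : Type} (r : Set (C × C)) : Set (Set C × Set C) :=
  {x | x.2 = {c' | ∃ c ∈ x.1, (c, c') ∈ r} ∧ x.2.Nonempty}

/-- Powerset determinisation of a transition (the predicate becomes the
trivial predicate on `Set C`). -/
def detTr {Q C Sym : Type} (τ : Tr Q C Sym) : Tr Q (Set C) Sym :=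
  ⟨τ.src, τ.lab, Set.univ, detRel τ.instr, τ.tgt⟩

/-! A run of `det(M)` on a set `d` of configurations tracks all runs of `M` from configurations
in `d` along the same transitions: after each step `det(r)` replaces `d` by its image `r(d)`.
Forwards, a run from `c ∈ d` stays inside these images; backwards, since there are no predicates
to check, every `c' ∈ r(d)` has an `r`-predecessor in `d`, and unwinding the run from its end
yields a run of `M` from some `c ∈ d`. Starting from `d = {c}` gives the converse. -/

section

variable {Q C Sym : Type}

theorem trStep_detTr_image {τ : Tr Q C Sym} {q p : Q} {c e : C} {w v : List Sym} {d : Set C}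
    (h : trStep τ (q, c, w) (p, e, v)) (hc : c ∈ d) :
    e ∈ SetRel.image τ.instr d ∧ trStep (detTr τ) (q, d, w) (p, SetRel.image τ.instr d, v) := by
  obtain ⟨hsrc, htgt, -, hinstr, hlab⟩ := h
  have he : e ∈ SetRel.image τ.instr d := ⟨c, hc, hinstr⟩
  exact ⟨he, hsrc, htgt, trivial, ⟨rfl, e, he⟩, hlab⟩

theorem exists_trStep_of_trStep_detTr {τ : Tr Q C Sym} (hpred : τ.pred = Set.univ) {q p : Q}
    {e : C} {w v : List Sym} {d d' : Set C}
    (h : trStep (detTr τ) (q, d, w) (p, d', v)) (he : e ∈ d') :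
    ∃ c ∈ d, trStep τ (q, c, w) (p, e, v) := by
  obtain ⟨hsrc, htgt, -, ⟨himage, -⟩, hlab⟩ := h
  obtain ⟨c, hc, hinstr⟩ := (show d' = SetRel.image τ.instr d from himage) ▸ he
  exact ⟨c, hc, hsrc, htgt, hpred ▸ Set.mem_univ c, hinstr, hlab⟩

theorem exists_runSeq_map_detTr {θ : List (Tr Q C Sym)} {q q' : Q} {c c' : C}
    {w w' : List Sym} {d : Set C} (h : runSeq θ (q, c, w) (q', c', w')) (hc : c ∈ d) :
    ∃ d', c' ∈ d' ∧ runSeq (θ.map detTr) (q, d, w) (q', d', w') := by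
  induction θ generalizing q c w d with
  | nil =>
    obtain ⟨rfl, rfl, rfl⟩ : q = q' ∧ c = c' ∧ w = w' := by simpa [runSeq] using h
    exact ⟨d, hc, rfl⟩
  | cons τ θ ih =>
    obtain ⟨⟨p, e, v⟩, hstep, hrun⟩ := h
    obtain ⟨he, hdet⟩ := trStep_detTr_image hstep hc
    obtain ⟨d', hc', hrun'⟩ := ih hrun he
    exact ⟨d', hc', _, hdet, hrun'⟩

theorem exists_runSeq_of_runSeq_map_detTr {θ : List (Tr Q C Sym)}
    (hpred : ∀ τ ∈ θ, τ.pred = Set.univ) {q q' : Q} {c' : C} {w w' : List Sym} {d d' : Set C}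
    (h : runSeq (θ.map detTr) (q, d, w) (q', d', w')) (hc' : c' ∈ d') :
    ∃ c ∈ d, runSeq θ (q, c, w) (q', c', w') := by
  induction θ generalizing q w d with
  | nil =>
    obtain ⟨rfl, rfl, rfl⟩ : q = q' ∧ d = d' ∧ w = w' := by simpa [runSeq] using h
    exact ⟨c', hc', rfl⟩
  | cons τ θ ih =>
    obtain ⟨⟨p, e, v⟩, hdet, hrun⟩ := h
    obtain ⟨c₁, hc₁, hrun'⟩ := ih (fun τ hτ => hpred τ (List.mem_cons_of_mem _ hτ)) hrun
    obtain ⟨c, hc, hstep⟩ := exists_trStep_of_trStep_detTr (hpred τ List.mem_cons_self) hdet hc₁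
    exact ⟨c, hc, _, hstep, hrun'⟩

end

theorem det_invariant_general {Q C Sym : Type} (M : Aut Q C Sym)
    (hpf : ∀ τ ∈ M.T, τ.pred = Set.univ)
    (θ : List (Tr Q C Sym)) (hθ : ∀ τ ∈ θ, τ ∈ M.T) :
    ∀ (q q' : Q) (c c' : C) (w w' : List Sym),
      runSeq θ (q, c, w) (q', c', w') ↔
      ∀ d : Set C, c ∈ d → ∃ d' : Set C, c' ∈ d' ∧
        runSeq (θ.map detTr) (q, d, w) (q', d', w') := by
  intro q q' c c' w w'
  refine ⟨fun h d hc => exists_runSeq_map_detTr h hc, fun h => ?_⟩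
  obtain ⟨d', hc', hrun⟩ := h {c} rfl
  obtain ⟨c₀, rfl, hrun'⟩ :=
    exists_runSeq_of_runSeq_map_detTr (fun τ hτ => hpf τ (hθ τ hτ)) hrun hc'
  exact hrun'

/-- Powerset-determinisation invariant for predicate-free automata:
`(q,c,w) ⊢_θ (q',c',w')` iff for every `d ∋ c` there is `d' ∋ c'` with
`(q,d,w) ⊢_{det(θ)} (q',d',w')`. -/
theorem det_invariant {Q C Sym : Type} (S : DS C) (M : Aut Q C Sym)
    (hval : ValidFor S M) (hpf : ∀ τ ∈ M.T, τ.pred = Set.univ)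
    (θ : List (Tr Q C Sym)) (hθ : ∀ τ ∈ θ, τ ∈ M.T) :
    ∀ (q q' : Q) (c c' : C) (w w' : List Sym),
      runSeq θ (q, c, w) (q', c', w') ↔
      ∀ d : Set C, c ∈ d → ∃ d' : Set C, c' ∈ d' ∧
        runSeq (θ.map detTr) (q, d, w) (q', d', w') :=
  det_invariant_general M hpf θ hθ
end

section
/- Composition of approximations: if A₁ : C ⇀ C̄ is S-proper and A₂ : C̄ ⇀ C' is (S¦A₁)-proper, then applying A₂ to the approximated automaton ℳ¦A₁ equals applying the composed strategy A₁ ; A₂ to ℳ, i.e., (ℳ¦A₁)¦A₂ = ℳ¦(A₁;A₂). -/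
/-- Approximation of a predicate: the image `A(p)`. -/
def appPred {C C' : Type} (A : C → Option C') (p : Set C) : Set C' :=
  {c' | ∃ c ∈ p, A c = some c'}

/-- Approximation of an instruction: `A⁻¹ ; r ; A`. -/
def appRel {C C' : Type} (A : C → Option C') (r : Set (C × C)) :
    Set (C' × C') :=
  {x | ∃ c₁ c₂, A c₁ = some x.1 ∧ (c₁, c₂) ∈ r ∧ A c₂ = some x.2}

/-- `A` is proper for a set of instructions if `(A⁻¹;r;A)(c')` is finite. -/
def ProperFor {C C' : Type} (A : C → Option C')
    (Rs : Set (Set (C × C))) : Prop :=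
  ∀ r ∈ Rs, ∀ c' : C', {c₂' | (c', c₂') ∈ appRel A r}.Finite

/-- Approximation of a transition. -/
def appTr {Q C C' Sym : Type} (A : C → Option C') (τ : Tr Q C Sym) :
    Tr Q C' Sym :=
  ⟨τ.src, τ.lab, appPred A τ.pred, appRel A τ.instr, τ.tgt⟩

/-- Approximation of an automaton with respect to `A`. -/
def appAut {Q C C' Sym : Type} (A : C → Option C') (M : Aut Q C Sym) :
    Aut Q C' Sym :=
  ⟨appTr A '' M.T, M.Tfin.image _, M.Qi, M.Qf⟩

/-- Totality of an approximation strategy. -/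
def TotalStrat {C C' : Type} (A : C → Option C') : Prop :=
  ∀ c, (A c).isSome

/-- Injectivity of a partial function. -/
def InjStrat {C C' : Type} (A : C → Option C') : Prop :=
  ∀ c₁ c₂ c', A c₁ = some c' → A c₂ = some c' → c₁ = c₂

section Composition

variable {C Cb C' : Type} (A₁ : C → Option Cb) (A₂ : Cb → Option C')

theorem appPred_appPred (p : Set C) :
    appPred A₂ (appPred A₁ p) = appPred (fun c => (A₁ c).bind A₂) p := by
  ext c'
  simp only [appPred, Set.mem_ofPred_eq, Option.bind_eq_some_iff]
  constructor
  · rintro ⟨b, ⟨c, hc, hcb⟩, hb⟩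
    exact ⟨c, hc, b, hcb, hb⟩
  · rintro ⟨c, hc, b, hcb, hb⟩
    exact ⟨b, ⟨c, hc, hcb⟩, hb⟩

theorem appRel_appRel (r : Set (C × C)) :
    appRel A₂ (appRel A₁ r) = appRel (fun c => (A₁ c).bind A₂) r := by
  ext ⟨x, y⟩
  simp only [appRel, Set.mem_ofPred_eq, Option.bind_eq_some_iff]
  constructor
  · rintro ⟨b₁, b₂, hb₁, ⟨c₁, c₂, hc₁, hr, hc₂⟩, hb₂⟩
    exact ⟨c₁, c₂, ⟨b₁, hc₁, hb₁⟩, hr, ⟨b₂, hc₂, hb₂⟩⟩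
  · rintro ⟨c₁, c₂, ⟨b₁, hc₁, hb₁⟩, hr, ⟨b₂, hc₂, hb₂⟩⟩
    exact ⟨b₁, b₂, hb₁, ⟨c₁, c₂, hc₁, hr, hc₂⟩, hb₂⟩

theorem appTr_appTr {Q Sym : Type} (τ : Tr Q C Sym) :
    appTr A₂ (appTr A₁ τ) = appTr (fun c => (A₁ c).bind A₂) τ := by
  simp only [appTr, appPred_appPred, appRel_appRel]

end Composition

theorem app_comp_general {Q C Cb C' Sym : Type} (M : Aut Q C Sym)
    (A₁ : C → Option Cb) (A₂ : Cb → Option C') :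
    appAut A₂ (appAut A₁ M) = appAut (fun c => (A₁ c).bind A₂) M := by
  simp only [appAut, Set.image_image, appTr_appTr]

/-- Composition of approximations: `(ℳ¦A₁)¦A₂ = ℳ¦(A₁;A₂)`. -/
theorem app_comp {Q C Cb C' Sym : Type} (S : DS C) (M : Aut Q C Sym)
    (hval : ValidFor S M) (A₁ : C → Option Cb) (A₂ : Cb → Option C')
    (h₁ : ProperFor A₁ S.instrs) (h₂ : ProperFor A₂ (appRel A₁ '' S.instrs)) :
    appAut A₂ (appAut A₁ M) = appAut (fun c => (A₁ c).bind A₂) M :=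
  app_comp_general M A₁ A₂
end

section
/- Superset-approximation run lemma: let ℳ be an (S,Σ)-automaton and A an S-proper total approximation strategy. For every sequence of transitions θ ∈ T*, states q, q', configurations c, c', and words w, w': if (q,c,w) ⊢_θ (q',c',w') in ℳ then (q,A(c),w) ⊢_{A(θ)} (q',A(c'),w') in ℳ¦A, where A(θ) applies the transition approximation pointwise. -/
/-- Superset-approximation run lemma: runs of `ℳ` are mapped to runs of
`ℳ¦A` by a total approximation strategy. -/
theorem superset_run_lemma {Q C C' Sym : Type} (S : DS C) (M : Aut Q C Sym)
    (hval : ValidFor S M) (A : C → Option C') (htot : TotalStrat A)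
    (hprop : ProperFor A S.instrs) :
    ∀ (θ : List (Tr Q C Sym)), (∀ τ ∈ θ, τ ∈ M.T) →
      ∀ (q q' : Q) (c c' : C) (w w' : List Sym) (ac ac' : C'),
        A c = some ac → A c' = some ac' →
        runSeq θ (q, c, w) (q', c', w') →
        runSeq (θ.map (appTr A)) (q, ac, w) (q', ac', w') := by
  intro θ
  induction θ with
  | nil =>
    intro _ q q' c c' w w' ac ac' hac hac' hrun
    obtain ⟨hq, hc, hw⟩ : q = q' ∧ c = c' ∧ w = w' := by
      simpa [runSeq, Prod.ext_iff] using hrun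
    subst hq hc hw
    have : ac = ac' := by rw [hac] at hac'; exact Option.some.inj hac'
    simp [runSeq, this]
  | cons τ θ ih =>
    intro hθ q q' c c' w w' ac ac' hac hac' hrun
    obtain ⟨⟨qz, cz, wz⟩, hstep, hrest⟩ := hrun
    obtain ⟨h1, h2, h3, h4, h5⟩ := hstep
    obtain ⟨acz, hacz⟩ := Option.isSome_iff_exists.mp (htot cz)
    refine ⟨(qz, acz, wz), ⟨h1, h2, ⟨c, h3, hac⟩, ⟨c, cz, hac, h4, hacz⟩, h5⟩, ?_⟩
    exact ih (fun τ' hτ' => hθ τ' (List.mem_cons_of_mem _ hτ')) qz q' cz c' wz w' acz ac' hacz hac' hrest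
end

section
/- Superset approximation theorem: if ℳ is an (S,Σ)-automaton and A is an S-proper total approximation strategy, then L(ℳ) ⊆ L(ℳ¦A). -/
lemma runSeq_app {Q C C' Sym : Type} (A : C → Option C') (htot : TotalStrat A) :
    ∀ (θ : List (Tr Q C Sym)) (q q' : Q) (c c' : C) (w w' : List Sym) (d : C'),
    runSeq θ (q, c, w) (q', c', w') → A c = some d →
    ∃ d', A c' = some d' ∧ runSeq (θ.map (appTr A)) (q, d, w) (q', d', w')
  | [], q, q', c, c', w, w', d, h, hd => by
      simp only [runSeq] at h
      obtain ⟨h1, h2, h3⟩ := Prod.mk.injEq .. ▸ h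
      cases h; exact ⟨d, hd, rfl⟩
  | τ :: θ, q, q', c, c', w, w', d, h, hd => by
      obtain ⟨⟨qz, cz, wz⟩, hstep, hrest⟩ := h
      obtain ⟨dz, hdz⟩ := Option.isSome_iff_exists.1 (htot cz)
      obtain ⟨d', hd', hrun⟩ := runSeq_app A htot θ qz q' cz c' wz w' dz hrest hdz
      refine ⟨d', hd', ⟨(qz, dz, wz), ?_, hrun⟩⟩
      obtain ⟨h1, h2, h3, h4, h5⟩ := hstep
      exact ⟨h1, h2, ⟨c, h3, hd⟩, ⟨c, cz, hd, h4, hdz⟩, h5⟩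

/-- Superset approximation theorem: `L(ℳ) ⊆ L(ℳ¦A)` for a total
`S`-proper approximation strategy `A`. -/
theorem superset_approximation {Q C C' Sym : Type} (S : DS C)
    (M : Aut Q C Sym) (hval : ValidFor S M) (A : C → Option C')
    (htot : TotalStrat A) (hprop : ProperFor A S.instrs) :
    langOf S.init M ⊆ langOptOf (A S.init) (appAut A M) := by
  intro w hw
  obtain ⟨θ, hθ, q, hq, q', hq', c', hrun⟩ := hw
  obtain ⟨d, hd⟩ := Option.isSome_iff_exists.1 (htot S.init)
  obtain ⟨d', _, hrun'⟩ := runSeq_app A htot θ q q' S.init c' w [] d hrun hd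
  exact ⟨d, hd, θ.map (appTr A),
    fun τ hτ => by
      obtain ⟨σ, hσ, rfl⟩ := List.mem_map.1 hτ
      exact Set.mem_image_of_mem _ (hθ σ hσ),
    q, hq, q', hq', d', hrun'⟩
end

section
/- Subset-approximation run lemma: let ℳ be an (S,Σ)-automaton and A an S-proper injective approximation strategy. For every transition sequence θ, states q, q', configurations c, c' in the image of A, and words w, w': if (q,c,w) ⊢_{A(θ)} (q',c',w') in ℳ¦A then (q,A⁻¹(c),w) ⊢_θ (q',A⁻¹(c'),w') in ℳ. -/
/-- Subset-approximation run lemma: runs of `ℳ¦A` between configurations in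
the image of an injective `A` lift back to runs of `ℳ` on the unique
preimages. -/
theorem subset_run_lemma {Q C C' Sym : Type} (S : DS C) (M : Aut Q C Sym)
    (hval : ValidFor S M) (A : C → Option C') (hinj : InjStrat A)
    (hprop : ProperFor A S.instrs) :
    ∀ (θ : List (Tr Q C Sym)), (∀ τ ∈ θ, τ ∈ M.T) →
      ∀ (q q' : Q) (c₀ c₀' : C) (w w' : List Sym) (ac ac' : C'),
        A c₀ = some ac → A c₀' = some ac' →
        runSeq (θ.map (appTr A)) (q, ac, w) (q', ac', w') →
        runSeq θ (q, c₀, w) (q', c₀', w') := by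
  intro θ
  induction θ with
  | nil =>
    intro _ q q' c₀ c₀' w w' ac ac' h1 h2 hr
    simp only [List.map_nil, runSeq] at hr ⊢
    obtain ⟨hq, hrest⟩ := Prod.mk.injEq .. ▸ hr
    obtain ⟨hc, hw⟩ := Prod.mk.injEq .. ▸ hrest
    subst hq hw
    have := hinj c₀ c₀' ac (h1) (hc ▸ h2)
    simp [this]
  | cons τ θ ih =>
    intro hmem q q' c₀ c₀' w w' ac ac' h1 h2 hr
    obtain ⟨⟨zq, zc, zw⟩, hstep, hrest⟩ := hr
    obtain ⟨hsrc, htgt, hpred, hinstr, hword⟩ := hstep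
    simp only [appTr] at hsrc htgt hpred hinstr hword
    obtain ⟨c₁, c₂, hA1, hr12, hA2⟩ := hinstr
    have hc1 : c₁ = c₀ := hinj c₁ c₀ ac hA1 h1
    subst hc1
    obtain ⟨cp, hcp, hAcp⟩ := hpred
    have : cp = c₁ := hinj cp c₁ ac hAcp hA1
    subst this
    refine ⟨(zq, c₂, zw), ⟨hsrc, htgt, hcp, hr12, hword⟩, ?_⟩
    exact ih (fun τ' h => hmem τ' (List.mem_cons_of_mem _ h)) zq q' c₂ c₀' zw w' zc ac' hA2 h2 hrest
end

section
/- Subset approximation theorem: if ℳ is an (S,Σ)-automaton and A is an S-proper injective approximation strategy, then L(ℳ¦A) ⊆ L(ℳ). -/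
lemma lift_run {Q C C' Sym : Type} (A : C → Option C') (hinj : InjStrat A)
    (T : Set (Tr Q C Sym)) :
    ∀ (θ' : List (Tr Q C' Sym)), (∀ τ' ∈ θ', τ' ∈ appTr A '' T) →
      ∀ q c c' w q'' c'' v, A c = some c' →
        runSeq θ' (q, c', w) (q'', c'', v) →
        ∃ θ : List (Tr Q C Sym), (∀ τ ∈ θ, τ ∈ T) ∧
          ∃ d, A d = some c'' ∧ runSeq θ (q, c, w) (q'', d, v) := by
  intro θ'
  induction θ' with
  | nil =>
    intro _ q c c' w q'' c'' v hA h
    obtain ⟨hq, hc, hw⟩ : q = q'' ∧ c' = c'' ∧ w = v := by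
      simpa [runSeq, Prod.ext_iff] using h
    exact ⟨[], by simp, c, by simp [hc ▸ hA, runSeq, hq, hw]⟩
  | cons τ' rest ih =>
    intro hmem q c c' w q'' c'' v hA h
    obtain ⟨⟨z₁, z₂, z₃⟩, hstep, hrest⟩ := h
    obtain ⟨τ, hτT, hτ⟩ := hmem τ' (by simp)
    obtain ⟨hsrc, htgt, hpred, hinstr, hlab⟩ := hstep
    subst hτ
    obtain ⟨d₁, d₂, hd₁, hd₁₂, hd₂⟩ := hinstr
    have hd₁c : d₁ = c := hinj _ _ _ hd₁ hA
    subst hd₁c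
    obtain ⟨θ, hθT, d, hdA, hrun⟩ :=
      ih (fun σ h => hmem σ (by simp [h])) τ.tgt d₂ z₂ z₃ q'' c'' v hd₂ (by
        simpa [appTr] using htgt ▸ hrest)
    refine ⟨τ :: θ, ?_, d, hdA, ⟨(τ.tgt, d₂, z₃), ?_, hrun⟩⟩
    · intro σ hσ
      simp only [List.mem_cons] at hσ
      rcases hσ with rfl | h
      · exact hτT
      · exact hθT _ h
    · obtain ⟨e, heP, heA⟩ := hpred
      have : e = d₁ := hinj _ _ _ heA hA
      exact ⟨by simpa [appTr] using hsrc, rfl, this ▸ heP, hd₁₂,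
        by simpa [appTr] using hlab⟩

/-- Subset approximation theorem: `L(ℳ¦A) ⊆ L(ℳ)` for an injective
`S`-proper approximation strategy `A`. -/
theorem subset_approximation {Q C C' Sym : Type} (S : DS C)
    (M : Aut Q C Sym) (hval : ValidFor S M) (A : C → Option C')
    (hinj : InjStrat A) (hprop : ProperFor A S.instrs) :
    langOptOf (A S.init) (appAut A M) ⊆ langOf S.init M := by
  rintro w ⟨c₀, hc₀, θ', hθ', q, hq, q', hq', c'', hrun⟩
  obtain ⟨θ, hθT, d, hdA, hrun'⟩ :=
    lift_run A hinj M.T θ' hθ' q S.init c₀ w q' c'' [] hc₀ hrun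
  exact ⟨θ, hθT, q, hq, q', hq', d, hrun'⟩
end

section
/- Finer strategies give smaller approximated languages: let A₁, A₂ be S-proper approximation strategies with A₁ finer than A₂ (i.e., there is a total function A with A₁;A = A₂). Then L(ℳ¦A₁) ⊆ L(ℳ¦A₂) for every (S,Σ)-automaton ℳ. -/
lemma finer_some {C C₁ C₂ : Type} {A₁ : C → Option C₁} {A₂ : C → Option C₂}
    {A : C₁ → C₂} (hA : ∀ c : C, (A₁ c).map A = A₂ c)
    {c : C} {c₁ : C₁} (h : A₁ c = some c₁) : A₂ c = some (A c₁) := by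
  rw [← hA c, h]; rfl

lemma finer_run {Q C C₁ C₂ Sym : Type} {A₁ : C → Option C₁} {A₂ : C → Option C₂}
    {A : C₁ → C₂} (hA : ∀ c : C, (A₁ c).map A = A₂ c) :
    ∀ (θ₀ : List (Tr Q C Sym)) (x y : Q × C₁ × List Sym),
      runSeq (θ₀.map (appTr A₁)) x y →
      runSeq (θ₀.map (appTr A₂)) (x.1, A x.2.1, x.2.2) (y.1, A y.2.1, y.2.2) := by
  intro θ₀
  induction θ₀ with
  | nil => intro x y h; cases h; rfl
  | cons τ θ ih =>
      rintro x y ⟨z, ⟨h1, h2, ⟨c, hc, hcA⟩, ⟨d₁, d₂, hd₁, hdr, hd₂⟩, h5⟩, hrest⟩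
      exact ⟨(z.1, A z.2.1, z.2.2),
        ⟨h1, h2, ⟨c, hc, finer_some hA hcA⟩,
          ⟨d₁, d₂, finer_some hA hd₁, hdr, finer_some hA hd₂⟩, h5⟩,
        ih z y hrest⟩

lemma unimage_list {Q C C₁ Sym : Type} {A₁ : C → Option C₁} {M : Aut Q C Sym} :
    ∀ θ : List (Tr Q C₁ Sym), (∀ τ ∈ θ, τ ∈ appTr A₁ '' M.T) →
      ∃ θ₀ : List (Tr Q C Sym), (∀ τ ∈ θ₀, τ ∈ M.T) ∧ θ = θ₀.map (appTr A₁) := by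
  intro θ
  induction θ with
  | nil => exact fun _ => ⟨[], by simp, rfl⟩
  | cons τ θ ih =>
      intro h
      obtain ⟨τ₀, hτ₀, hτeq⟩ := h τ (by simp)
      obtain ⟨θ₀, hθ₀, hθeq⟩ := ih fun τ' hτ' => h τ' (by simp [hτ'])
      exact ⟨τ₀ :: θ₀, by
        intro x hx; rcases List.mem_cons.mp hx with rfl | hx
        · exact hτ₀
        · exact hθ₀ _ hx, by simp [hτeq.symm, hθeq]⟩

/-- If `A₁` is finer than `A₂` (there is a total `A` with `A₁;A = A₂`),
then `L(ℳ¦A₁) ⊆ L(ℳ¦A₂)`. -/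
theorem finer_approximation {Q C C₁ C₂ Sym : Type} (S : DS C)
    (M : Aut Q C Sym) (hval : ValidFor S M)
    (A₁ : C → Option C₁) (A₂ : C → Option C₂)
    (h₁ : ProperFor A₁ S.instrs) (h₂ : ProperFor A₂ S.instrs)
    (hfiner : ∃ A : C₁ → C₂, ∀ c : C, (A₁ c).map A = A₂ c) :
    langOptOf (A₁ S.init) (appAut A₁ M) ⊆
      langOptOf (A₂ S.init) (appAut A₂ M) := by
  obtain ⟨A, hA⟩ := hfiner
  rintro w ⟨c₀, hc₀, θ, hθ, q, hq, q', hq', c', hrun⟩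
  obtain ⟨θ₀, hθ₀, rfl⟩ := unimage_list θ hθ
  refine ⟨A c₀, finer_some hA hc₀, θ₀.map (appTr A₂), ?_, q, hq, q', hq', A c',
    finer_run hA θ₀ (q, c₀, w) (q', c', []) hrun⟩
  intro τ hτ
  simp only [List.mem_map] at hτ
  obtain ⟨τ₀, hτ₀, rfl⟩ := hτ
  exact ⟨τ₀, hθ₀ _ hτ₀, rfl⟩
end

section
/- Less-partial strategies give larger approximated languages: let A₁, A₂ be S-proper approximation strategies with A₁ less partial than A₂ (i.e., there is an injective partial function A with A₁;A = A₂). Then L(ℳ¦A₁) ⊇ L(ℳ¦A₂) for every (S,Σ)-automaton ℳ. -/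
/-!
Since `A₂ = A₁;A`, approximating by `A₂` is the same as approximating by `A₁` and then
approximating the result by `A`. So it suffices that an injective approximation `A` never
enlarges the language. It does not: a run of `ℳ¦A` from `A u` lifts step by step to a run
of `ℳ` from `u`, because injectivity makes the preimage of each configuration unique, so the
configuration reached by one step is exactly the one the next predicate and instruction
are tested on.
-/

section Composition

variable {C C₁ C₂ : Type} (A₁ : C → Option C₁) (A : C₁ → Option C₂)

theorem appPred_bind (p : Set C) :
    appPred (fun c => (A₁ c).bind A) p = appPred A (appPred A₁ p) := by
  ext x
  simp only [appPred, Option.bind_eq_some_iff, Set.mem_ofPred_eq]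
  constructor
  · rintro ⟨c, hc, u, hu, hx⟩
    exact ⟨u, ⟨c, hc, hu⟩, hx⟩
  · rintro ⟨u, ⟨c, hc, hu⟩, hx⟩
    exact ⟨c, hc, u, hu, hx⟩

theorem appRel_bind (r : Set (C × C)) :
    appRel (fun c => (A₁ c).bind A) r = appRel A (appRel A₁ r) := by
  ext ⟨x, y⟩
  simp only [appRel, Option.bind_eq_some_iff, Set.mem_ofPred_eq]
  constructor
  · rintro ⟨c, d, ⟨u, hu, hx⟩, hcd, ⟨v, hv, hy⟩⟩
    exact ⟨u, v, hx, ⟨c, d, hu, hcd, hv⟩, hy⟩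
  · rintro ⟨u, v, hx, ⟨c, d, hu, hcd, hv⟩, hy⟩
    exact ⟨c, d, ⟨u, hu, hx⟩, hcd, ⟨v, hv, hy⟩⟩

theorem appTr_bind {Q Sym : Type} (τ : Tr Q C Sym) :
    appTr (fun c => (A₁ c).bind A) τ = appTr A (appTr A₁ τ) := by
  simp only [appTr, appPred_bind, appRel_bind]

theorem appAut_bind {Q Sym : Type} (M : Aut Q C Sym) :
    appAut (fun c => (A₁ c).bind A) M = appAut A (appAut A₁ M) := by
  simp only [appAut, Set.image_image, appTr_bind]

end Composition

namespace InjStrat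

variable {Q C C' Sym : Type} {A : C → Option C'}

theorem lift_trStep (hA : InjStrat A) {τ : Tr Q C Sym} {x y : Q × C' × List Sym} {u : C}
    (hstep : trStep (appTr A τ) x y) (hu : A u = some x.2.1) :
    ∃ v, A v = some y.2.1 ∧ trStep τ (x.1, u, x.2.2) (y.1, v, y.2.2) := by
  obtain ⟨hsrc, htgt, ⟨c, hc, hcx⟩, ⟨c₁, c₂, hc₁, hc₁₂, hc₂⟩, hlab⟩ := hstep
  obtain rfl : c = u := hA _ _ _ hcx hu
  obtain rfl : c₁ = c := hA _ _ _ hc₁ hu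
  exact ⟨c₂, hc₂, hsrc, htgt, hc, hc₁₂, hlab⟩

theorem lift_runSeq (hA : InjStrat A) {T : Set (Tr Q C Sym)} :
    ∀ {θ : List (Tr Q C' Sym)} {x y : Q × C' × List Sym} {u : C},
      (∀ τ ∈ θ, τ ∈ appTr A '' T) → runSeq θ x y → A u = some x.2.1 →
      ∃ θ₀ : List (Tr Q C Sym), (∀ τ ∈ θ₀, τ ∈ T) ∧
        ∃ v, runSeq θ₀ (x.1, u, x.2.2) (y.1, v, y.2.2)
  | [], _, _, u, _, rfl, _ => ⟨[], by simp, u, rfl⟩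
  | _ :: _, _, _, _, hθ, ⟨_, hstep, hrest⟩, hu => by
    obtain ⟨τ, hτ, rfl⟩ := hθ _ List.mem_cons_self
    obtain ⟨v, hv, hstep₀⟩ := hA.lift_trStep hstep hu
    obtain ⟨θ₀, hθ₀, w, hrun₀⟩ :=
      hA.lift_runSeq (fun σ hσ => hθ σ (List.mem_cons_of_mem _ hσ)) hrest hv
    refine ⟨τ :: θ₀, ?_, w, _, hstep₀, hrun₀⟩
    simpa only [List.mem_cons, forall_eq_or_imp] using ⟨hτ, hθ₀⟩

theorem langOf_appAut_subset (hA : InjStrat A) (M : Aut Q C Sym) {u : C} {c : C'}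
    (hu : A u = some c) : langOf c (appAut A M) ⊆ langOf u M := by
  rintro w ⟨θ, hθ, q, hq, q', hq', c', hrun⟩
  obtain ⟨θ₀, hθ₀, v, hrun₀⟩ := hA.lift_runSeq hθ hrun hu
  exact ⟨θ₀, hθ₀, q, hq, q', hq', v, hrun₀⟩

theorem langOptOf_bind_appAut_subset (hA : InjStrat A) (M : Aut Q C Sym) (o : Option C) :
    langOptOf (o.bind A) (appAut A M) ⊆ langOptOf o M := by
  rintro w ⟨c, ho, hw⟩
  obtain ⟨u, rfl, hu⟩ := Option.bind_eq_some_iff.mp ho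
  exact ⟨u, rfl, hA.langOf_appAut_subset M hu hw⟩

end InjStrat

theorem less_partial_approximation_general {Q C C₁ C₂ Sym : Type} (S : DS C)
    (M : Aut Q C Sym)
    (A₁ : C → Option C₁) (A₂ : C → Option C₂)
    (hlp : ∃ A : C₁ → Option C₂, InjStrat A ∧ ∀ c : C, (A₁ c).bind A = A₂ c) :
    langOptOf (A₂ S.init) (appAut A₂ M) ⊆
      langOptOf (A₁ S.init) (appAut A₁ M) := by
  obtain ⟨A, hA, hcomp⟩ := hlp
  obtain rfl : (fun c => (A₁ c).bind A) = A₂ := funext hcomp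
  rw [appAut_bind]
  exact hA.langOptOf_bind_appAut_subset _ _

/-- If `A₁` is less partial than `A₂` (there is an injective partial `A`
with `A₁;A = A₂`), then `L(ℳ¦A₁) ⊇ L(ℳ¦A₂)`. -/
theorem less_partial_approximation {Q C C₁ C₂ Sym : Type} (S : DS C)
    (M : Aut Q C Sym) (hval : ValidFor S M)
    (A₁ : C → Option C₁) (A₂ : C → Option C₂)
    (h₁ : ProperFor A₁ S.instrs) (h₂ : ProperFor A₂ S.instrs)
    (hlp : ∃ A : C₁ → Option C₂, InjStrat A ∧ ∀ c : C, (A₁ c).bind A = A₂ c) :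
    langOptOf (A₂ S.init) (appAut A₂ M) ⊆
      langOptOf (A₁ S.init) (appAut A₁ M) :=
  less_partial_approximation_general S M A₁ A₂ hlp
end

section
/- Weighted run-weight lemma (upper bound): let ℳ be an (S,Σ,K)-automaton over a complete semiring K positively ordered by ≤, and A an S-proper approximation strategy. Then for every run θ' of ℳ¦A: wt_{ℳ¦A}(θ') ≥ Σ_{θ ∈ Runs_ℳ, A(θ)=θ'} wt_ℳ(θ). If moreover A is injective, equality holds. -/
/-- Weight of a sequence of transitions. -/
def wtOf {Q C Sym K : Type} [Semiring K] (δ : Tr Q C Sym → K)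
    (θ : List (Tr Q C Sym)) : K :=
  (θ.map δ).prod

/-- The set of runs of an automaton. -/
def RunsM {Q C Sym : Type} (M : Aut Q C Sym) : Set (List (Tr Q C Sym)) :=
  {θ | (∀ τ ∈ θ, τ ∈ M.T) ∧ ∃ x y, runSeq θ x y}

/-- The set of accepting runs of an automaton on a word. -/
def RunsOn {Q C Sym : Type} (init : C) (M : Aut Q C Sym) (w : List Sym) :
    Set (List (Tr Q C Sym)) :=
  {θ | (∀ τ ∈ θ, τ ∈ M.T) ∧
    ∃ q ∈ M.Qi, ∃ q' ∈ M.Qf, ∃ c', runSeq θ (q, init, w) (q', c', [])}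

/-- Accepting runs where the initial configuration may be undefined. -/
def RunsOnOpt {Q C Sym : Type} (initO : Option C) (M : Aut Q C Sym)
    (w : List Sym) : Set (List (Tr Q C Sym)) :=
  {θ | ∃ c₀, initO = some c₀ ∧ θ ∈ RunsOn c₀ M w}

/-- Weight assignment of the approximated automaton:
`(δ¦A)(τ') = Σ_{τ ∈ T, τ¦A = τ'} δ(τ)`. -/
noncomputable def appWt {Q C C' Sym K : Type} [Semiring K]
    [TopologicalSpace K] (A : C → Option C') (M : Aut Q C Sym)
    (δ : Tr Q C Sym → K) (τ' : Tr Q C' Sym) : K :=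
  ∑' τ : {τ : Tr Q C Sym // τ ∈ M.T ∧ appTr A τ = τ'}, δ τ.1

/-- The weighted language `⟦ℳ⟧(w)`. -/
noncomputable def semOf {Q C Sym K : Type} [Semiring K] [TopologicalSpace K]
    (init : C) (M : Aut Q C Sym) (δ : Tr Q C Sym → K) (w : List Sym) : K :=
  ∑' θ : RunsOn init M w, wtOf δ θ.1

/-- The weighted language with possibly undefined initial configuration. -/
noncomputable def semOptOf {Q C Sym K : Type} [Semiring K] [TopologicalSpace K]
    (initO : Option C) (M : Aut Q C Sym) (δ : Tr Q C Sym → K)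
    (w : List Sym) : K :=
  ∑' θ : RunsOnOpt initO M w, wtOf δ θ.1


-- Auxiliary lemmas --------------------------------------------------------

lemma tsum_finite' {α K : Type} [AddCommMonoid K] [TopologicalSpace K]
    {s : Set α} (hs : s.Finite) (f : α → K) :
    ∑' x : s, f x = ∑ x ∈ hs.toFinset, f x := by
  haveI := hs.fintype
  rw [tsum_fintype, ← Finset.sum_coe_sort hs.toFinset f]
  exact Fintype.sum_equiv (Equiv.subtypeEquivRight (by simp)) _ _ (fun _ => rfl)

lemma lists_finite {Q C C' Sym : Type} (A : C → Option C') (M : Aut Q C Sym) :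
    ∀ θ' : List (Tr Q C' Sym),
      {θ : List (Tr Q C Sym) | (∀ τ ∈ θ, τ ∈ M.T) ∧ θ.map (appTr A) = θ'}.Finite
  | [] => Set.Finite.subset (Set.finite_singleton []) (by
      rintro θ ⟨-, h⟩
      simpa using List.map_eq_nil_iff.mp h)
  | τ' :: θ'' => by
      have h1 : {τ | τ ∈ M.T ∧ appTr A τ = τ'}.Finite := M.Tfin.subset (fun τ h => h.1)
      have h2 := lists_finite A M θ''
      refine Set.Finite.subset (Set.Finite.image2 (· :: ·) h1 h2) ?_
      rintro θ ⟨hT, hmap⟩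
      cases θ with
      | nil => simp at hmap
      | cons τ θ =>
        simp only [List.map_cons, List.cons.injEq] at hmap
        exact Set.mem_image2_of_mem ⟨hT τ (by simp), hmap.1⟩
          ⟨fun x hx => hT x (by simp [hx]), hmap.2⟩

lemma key_lemma {Q C C' Sym K : Type} [Semiring K] [TopologicalSpace K]
    (A : C → Option C') (M : Aut Q C Sym) (δ : Tr Q C Sym → K) :
    ∀ θ' : List (Tr Q C' Sym),
      wtOf (appWt A M δ) θ' = ∑ θ ∈ (lists_finite A M θ').toFinset, wtOf δ θ
  | [] => by
      have hset : {θ : List (Tr Q C Sym) | (∀ τ ∈ θ, τ ∈ M.T) ∧ θ.map (appTr A) = ([] : List (Tr Q C' Sym))}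
          = {[]} := by
        ext θ
        constructor
        · rintro ⟨-, h⟩; simpa using List.map_eq_nil_iff.mp h
        · rintro rfl; exact ⟨by simp, rfl⟩
      have : (lists_finite A M ([] : List (Tr Q C' Sym))).toFinset = {[]} := by
        ext θ; rw [Set.Finite.mem_toFinset, hset]; simp
      rw [this]
      simp [wtOf]
  | τ' :: θ'' => by
      have ht : {τ : Tr Q C Sym | τ ∈ M.T ∧ appTr A τ = τ'}.Finite :=
        M.Tfin.subset (fun τ h => h.1)
      have h1 : wtOf (appWt A M δ) (τ' :: θ'')
          = appWt A M δ τ' * wtOf (appWt A M δ) θ'' := by simp [wtOf]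
      have h2 : appWt A M δ τ' = ∑ τ ∈ ht.toFinset, δ τ := tsum_finite' ht δ
      rw [h1, h2, key_lemma A M δ θ'', Finset.sum_mul_sum, ← Finset.sum_product']
      refine Finset.sum_bij (fun p _ => p.1 :: p.2) ?_ ?_ ?_ ?_
      · rintro ⟨τ, θ⟩ hp
        simp only [Finset.mem_product, Set.Finite.mem_toFinset, Set.mem_setOf_eq] at hp
        obtain ⟨⟨hτT, hτa⟩, hθT, hθm⟩ := hp
        simp only [Set.Finite.mem_toFinset, Set.mem_setOf_eq]
        refine ⟨?_, by simp [hτa, hθm]⟩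
        rintro x hx
        rcases List.mem_cons.mp hx with rfl | hx
        · exact hτT
        · exact hθT x hx
      · rintro ⟨τ₁, θ₁⟩ h₁ ⟨τ₂, θ₂⟩ h₂ h
        simp only [List.cons.injEq] at h
        simp [h.1, h.2]
      · rintro θ hθ
        simp only [Set.Finite.mem_toFinset, Set.mem_setOf_eq] at hθ
        obtain ⟨hT, hm⟩ := hθ
        cases θ with
        | nil => simp at hm
        | cons τ θ =>
          simp only [List.map_cons, List.cons.injEq] at hm
          refine ⟨⟨τ, θ⟩, ?_, rfl⟩
          simp only [Finset.mem_product, Set.Finite.mem_toFinset, Set.mem_setOf_eq]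
          exact ⟨⟨hT τ (by simp), hm.1⟩, fun x hx => hT x (by simp [hx]), hm.2⟩
      · rintro ⟨τ, θ⟩ hp
        simp [wtOf]

lemma lift_run_s17 {Q C C' Sym : Type} (A : C → Option C') (hinj : InjStrat A) :
    ∀ (θ : List (Tr Q C Sym)) (x' y' : Q × C' × List Sym) (c : C),
      runSeq (θ.map (appTr A)) x' y' → A c = some x'.2.1 →
      ∃ y, runSeq θ (x'.1, c, x'.2.2) y
  | [], x', y', c, h, hc => ⟨(x'.1, c, x'.2.2), rfl⟩
  | τ :: θ, x', y', c, h, hc => by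
      obtain ⟨z', hstep, hrest⟩ := h
      obtain ⟨hsrc, htgt, hpred, hinstr, hw⟩ := hstep
      obtain ⟨c₁, c₂, hA1, hr, hA2⟩ := hinstr
      obtain ⟨c₀, hc₀, hA0⟩ := hpred
      have e1 : c₁ = c := hinj _ _ _ hA1 hc
      have e0 : c₀ = c := hinj _ _ _ hA0 hc
      obtain ⟨y, hy⟩ := lift_run_s17 A hinj θ z' y' c₂ hrest hA2
      exact ⟨y, ⟨(z'.1, c₂, z'.2.2), ⟨hsrc, htgt, e0 ▸ hc₀, e1 ▸ hr, hw⟩, hy⟩⟩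

lemma sum_mono' {K : Type} [Semiring K] [PartialOrder K]
    (hzero : ∀ a : K, 0 ≤ a) (hadd : ∀ a b c : K, a ≤ b → a + c ≤ b + c)
    {α : Type} {s t : Finset α} (h : s ⊆ t) (f : α → K) :
    ∑ x ∈ s, f x ≤ ∑ x ∈ t, f x := by
  classical
  calc ∑ x ∈ s, f x = 0 + ∑ x ∈ s, f x := (zero_add _).symm
    _ ≤ (∑ x ∈ t \ s, f x) + ∑ x ∈ s, f x := hadd 0 _ _ (hzero _)
    _ = ∑ x ∈ t, f x := Finset.sum_sdiff h

/-- Weighted run-weight lemma: for every run `θ'` of `ℳ¦A`,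
`wt_{ℳ¦A}(θ') ≥ Σ_{θ ∈ Runs_ℳ, A(θ)=θ'} wt_ℳ(θ)`; if `A` is injective,
equality holds. -/
theorem weighted_run_weight_lemma {Q C C' Sym K : Type} [Semiring K]
    [PartialOrder K] [TopologicalSpace K]
    (hzero : ∀ a : K, 0 ≤ a)
    (hadd : ∀ a b c : K, a ≤ b → a + c ≤ b + c)
    (hmul : ∀ a b c : K, a ≤ b → a * c ≤ b * c)
    (hmul' : ∀ a b c : K, a ≤ b → c * a ≤ c * b)
    (S : DS C) (M : Aut Q C Sym) (hval : ValidFor S M)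
    (δ : Tr Q C Sym → K) (A : C → Option C')
    (hprop : ProperFor A S.instrs) :
    (∀ θ' ∈ RunsM (appAut A M),
      (∑' θ : {θ : List (Tr Q C Sym) //
          θ ∈ RunsM M ∧ θ.map (appTr A) = θ'}, wtOf δ θ.1)
        ≤ wtOf (appWt A M δ) θ') ∧
    (InjStrat A → ∀ θ' ∈ RunsM (appAut A M),
      wtOf (appWt A M δ) θ'
        = ∑' θ : {θ : List (Tr Q C Sym) //
            θ ∈ RunsM M ∧ θ.map (appTr A) = θ'}, wtOf δ θ.1) := by
  have hfinR : ∀ θ' : List (Tr Q C' Sym),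
      {θ : List (Tr Q C Sym) | θ ∈ RunsM M ∧ θ.map (appTr A) = θ'}.Finite :=
    fun θ' => (lists_finite A M θ').subset (fun θ h => ⟨h.1.1, h.2⟩)
  have hconv : ∀ θ' : List (Tr Q C' Sym),
      (∑' θ : {θ : List (Tr Q C Sym) //
          θ ∈ RunsM M ∧ θ.map (appTr A) = θ'}, wtOf δ θ.1)
        = ∑ θ ∈ (hfinR θ').toFinset, wtOf δ θ :=
    fun θ' => tsum_finite' (hfinR θ') (wtOf δ)
  constructor
  · intro θ' _
    rw [hconv θ', key_lemma A M δ θ']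
    refine sum_mono' hzero hadd ?_ (wtOf δ)
    intro θ hθ
    simp only [Set.Finite.mem_toFinset, Set.mem_setOf_eq] at hθ ⊢
    exact ⟨hθ.1.1, hθ.2⟩
  · intro hinj θ' hθ'
    rw [hconv θ', key_lemma A M δ θ']
    congr 1
    ext θ
    simp only [Set.Finite.mem_toFinset, Set.mem_setOf_eq]
    constructor
    · rintro ⟨hT, hm⟩
      refine ⟨⟨hT, ?_⟩, hm⟩
      obtain ⟨-, x', y', hrun'⟩ := hθ'
      cases θ with
      | nil => exact ⟨(x'.1, S.init, []), (x'.1, S.init, []), rfl⟩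
      | cons τ θ₀ =>
        rw [← hm] at hrun'
        obtain ⟨z', hstep, hrest⟩ := hrun'
        obtain ⟨hsrc, htgt, hpred, hinstr, hw⟩ := hstep
        obtain ⟨c, hc, hAc⟩ := hpred
        obtain ⟨y, hy⟩ := lift_run_s17 A hinj (τ :: θ₀) x' y' c
          (⟨z', ⟨hsrc, htgt, ⟨c, hc, hAc⟩, hinstr, hw⟩, hrest⟩) hAc
        exact ⟨(x'.1, c, x'.2.2), y, hy⟩
    · rintro ⟨hR, hm⟩
      exact ⟨hR.1, hm⟩
end
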